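/- Let (X,Y) ∼ D where D is a probability distribution on {-1,1}^d × {-1,1}, and let k ≤ d. Then the minimum 0-1 loss over all k-juntas satisfies: min over k-juntas g of P{Y ≠ g(X)} = 1/2 − (1/2)·max over subsets J ⊆ {1,…,d} with |J| = k of Σ_{x ∈ {-1,1}^d} |f^J(x)|, where f^J(x) = Σ_{S⊆J} a_S·χ_S(x) and a_S = 2^{−d}·E[Y·χ_S(X)]. -/

import Mathlib

open MeasureTheory ProbabilityTheory
open scoped Classical

/-- The character (monomial) `χ_S(x) = ∏_{j ∈ S} x_j` associated with `S ⊆ [d]`. -/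
noncomputable def chiChar {d : ℕ} (S : Finset (Fin d)) (x : Fin d → ℝ) : ℝ := ∏ j ∈ S, x j

/-- The point of the Boolean cube `{-1,1}^d` encoded by a Boolean vector. -/
noncomputable def pmOf {d : ℕ} (b : Fin d → Bool) : Fin d → ℝ :=
  fun i => if b i then 1 else -1

/-- The stochastic Fourier coefficient `a_S = 2^{-d}·E[Y·χ_S(X)]` of the label under `D`. -/
noncomputable def coeffA {d : ℕ} (D : Measure ((Fin d → ℝ) × ℝ)) (S : Finset (Fin d)) : ℝ :=
  (1 / 2 ^ d : ℝ) * ∫ p, p.2 * chiChar S p.1 ∂D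

/-- The function `f^J(x) = Σ_{S ⊆ J} a_S·χ_S(x)`. -/
noncomputable def fJ {d : ℕ} (D : Measure ((Fin d → ℝ) × ℝ)) (J : Finset (Fin d))
    (x : Fin d → ℝ) : ℝ :=
  ∑ S ∈ J.powerset, coeffA D S * chiChar S x

/-!
For a `±1`-valued `g` the loss is `P(Y ≠ g(X)) = (1 - E[Y g(X)]) / 2`. If `g` depends only on the
coordinates in `J`, the reproducing identity
`∑_{S ⊆ J} χ_S(x) χ_S(y) = ∏_{j ∈ J} (1 + x_j y_j) = 2^{|J|} [x_J = y_J]` on the cube gives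
`E[Y g(X)] = ∑_x g(x) f^J(x) ≤ ∑_x |f^J(x)|`, with equality for `g = sign f^J`, which is itself a
`J`-junta. Since `k ≤ d`, a junta on at most `k` coordinates is a junta on some `J` with `|J| = k`.
As `D` is carried by the finite set `{±1}^d × {±1}`, every function is integrable against it, so
finite sums commute freely with the expectation.
-/

open Finset Function

section FiniteSupport

variable {α : Type*} [MeasurableSpace α] [MeasurableSingletonClass α] {μ : Measure α}
  {T : Finset α}

theorem integrable_of_ae_mem_finset {E : Type*} [NormedAddCommGroup E] [IsFiniteMeasure μ]
    (hT : ∀ᵐ x ∂μ, x ∈ T) (f : α → E) :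
    Integrable f μ := by
  rw [← Measure.restrict_eq_self_of_ae_mem hT]
  exact IntegrableOn.finset

theorem measureReal_eq_integral_indicator_one_of_ae_mem_finset (hT : ∀ᵐ x ∂μ, x ∈ T)
    (A : Set α) : μ.real A = ∫ x, A.indicator 1 x ∂μ := by
  have hAT : MeasurableSet (A ∩ T) := (T.finite_toSet.subset Set.inter_subset_right).measurableSet
  calc μ.real A = μ.real (A ∩ T) := by
        rw [measureReal_def, measureReal_def, ← Measure.restrict_apply' T.measurableSet,
          Measure.restrict_eq_self_of_ae_mem hT]
    _ = ∫ x, (A ∩ T).indicator 1 x ∂μ := (integral_indicator_one hAT).symm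
    _ = ∫ x, A.indicator 1 x ∂μ := by
        refine integral_congr_ae ?_
        filter_upwards [hT] with x hx
        simp [Set.indicator, hx]

end FiniteSupport

section BooleanCube

variable {d : ℕ}

theorem pmOf_eq_one_or_neg_one (b : Fin d → Bool) (i : Fin d) : pmOf b i = 1 ∨ pmOf b i = -1 := by
  unfold pmOf
  split <;> simp

theorem exists_pmOf_eq {x : Fin d → ℝ} (hx : ∀ i, x i = 1 ∨ x i = -1) : ∃ b, pmOf b = x :=
  ⟨fun i => decide (x i = 1), funext fun i => by rcases hx i with h | h <;> norm_num [pmOf, h]⟩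

theorem sum_chiChar_mul_chiChar (J : Finset (Fin d)) (x y : Fin d → ℝ) :
    ∑ S ∈ J.powerset, chiChar S x * chiChar S y = ∏ j ∈ J, (1 + x j * y j) := by
  simp only [chiChar, ← prod_mul_distrib]
  exact (prod_one_add J).symm

theorem sum_prod_one_add_pmOf_mul (J : Finset (Fin d)) (y : Fin d → ℝ) :
    ∑ b : Fin d → Bool, ∏ j ∈ J, (1 + pmOf b j * y j) = 2 ^ d := by
  -- the sum over `b` factorises over the coordinates, and `(1 + t) + (1 - t) = 2`
  calc ∑ b : Fin d → Bool, ∏ j ∈ J, (1 + pmOf b j * y j)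
      = ∑ b : Fin d → Bool, ∏ j, (if j ∈ J then 1 + pmOf b j * y j else 1) :=
        sum_congr rfl fun b _ => (prod_ite_mem_eq J _).symm
    _ = ∏ j, ∑ s : Bool, (if j ∈ J then 1 + (if s then 1 else -1) * y j else 1) := by
        rw [Fintype.prod_sum]
        rfl
    _ = ∏ _j : Fin d, (2 : ℝ) := prod_congr rfl fun j _ => by split_ifs <;> norm_num; ring
    _ = 2 ^ d := by simp

theorem sum_mul_prod_one_add_pmOf_mul {J : Finset (Fin d)} {g : (Fin d → ℝ) → ℝ}
    (hg : DependsOn g J) {y : Fin d → ℝ} (hy : ∀ i, y i = 1 ∨ y i = -1) :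
    ∑ b : Fin d → Bool, g (pmOf b) * ∏ j ∈ J, (1 + pmOf b j * y j) = 2 ^ d * g y := by
  rw [← sum_prod_one_add_pmOf_mul J y, sum_mul]
  refine sum_congr rfl fun b _ => ?_
  by_cases hagree : ∀ j ∈ J, pmOf b j = y j
  · rw [mul_comm, hg hagree]
  · obtain ⟨j, hj, hne⟩ : ∃ j ∈ J, pmOf b j ≠ y j := by simpa using hagree
    have hvanish : 1 + pmOf b j * y j = 0 := by
      rcases pmOf_eq_one_or_neg_one b j with h | h <;> rcases hy j with h' | h' <;>
        simp_all
    rw [prod_eq_zero hj hvanish, mul_zero, zero_mul]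

theorem fJ_dependsOn (D : Measure ((Fin d → ℝ) × ℝ)) (J : Finset (Fin d)) :
    DependsOn (fJ D J) J := fun x y h =>
  sum_congr rfl fun S hS => by
    rw [chiChar, chiChar, prod_congr rfl fun j hj => h j (mem_powerset.1 hS hj)]

end BooleanCube

section Loss

variable {d : ℕ} {D : Measure ((Fin d → ℝ) × ℝ)}

noncomputable def labelledCube (d : ℕ) : Finset ((Fin d → ℝ) × ℝ) := univ.image pmOf ×ˢ {1, -1}

theorem ae_mem_labelledCube
    (hD : ∀ᵐ p ∂D, (∀ i, p.1 i = 1 ∨ p.1 i = -1) ∧ (p.2 = 1 ∨ p.2 = -1)) :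
    ∀ᵐ p ∂D, p ∈ labelledCube d := by
  filter_upwards [hD] with p ⟨hx, hy⟩
  obtain ⟨b, hb⟩ := exists_pmOf_eq hx
  exact mem_product.2 ⟨mem_image.2 ⟨b, mem_univ _, hb⟩, by simpa using hy⟩

theorem measureReal_label_ne_eq [IsProbabilityMeasure D]
    (hD : ∀ᵐ p ∂D, (∀ i, p.1 i = 1 ∨ p.1 i = -1) ∧ (p.2 = 1 ∨ p.2 = -1))
    {g : (Fin d → ℝ) → ℝ} (hg : ∀ x, g x = 1 ∨ g x = -1) :
    D.real {p | p.2 ≠ g p.1} = 1 / 2 - 1 / 2 * ∫ p, p.2 * g p.1 ∂D := by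
  have hfin := ae_mem_labelledCube hD
  rw [measureReal_eq_integral_indicator_one_of_ae_mem_finset hfin]
  calc ∫ p, {p : (Fin d → ℝ) × ℝ | p.2 ≠ g p.1}.indicator 1 p ∂D
      = ∫ p, (1 / 2 - 1 / 2 * (p.2 * g p.1)) ∂D := by
        refine integral_congr_ae ?_
        filter_upwards [hD] with p ⟨_, hy⟩
        rcases hy with h | h <;> rcases hg p.1 with h' | h' <;>
          simp [Set.indicator, h, h'] <;> norm_num
    _ = 1 / 2 - 1 / 2 * ∫ p, p.2 * g p.1 ∂D := by
        rw [integral_sub (integrable_const _) (integrable_of_ae_mem_finset hfin _),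
          integral_const_mul, integral_const, probReal_univ, one_smul]

theorem integral_label_mul_eq_sum_mul_fJ [IsProbabilityMeasure D]
    (hD : ∀ᵐ p ∂D, (∀ i, p.1 i = 1 ∨ p.1 i = -1) ∧ (p.2 = 1 ∨ p.2 = -1))
    {J : Finset (Fin d)} {g : (Fin d → ℝ) → ℝ} (hg : DependsOn g J) :
    ∫ p, p.2 * g p.1 ∂D = ∑ b : Fin d → Bool, g (pmOf b) * fJ D J (pmOf b) := by
  have hint : ∀ f : (Fin d → ℝ) × ℝ → ℝ, Integrable f D :=
    integrable_of_ae_mem_finset (ae_mem_labelledCube hD)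
  calc ∫ p, p.2 * g p.1 ∂D
      = ∫ p, p.2 / 2 ^ d * ∑ b : Fin d → Bool, g (pmOf b) *
          ∑ S ∈ J.powerset, chiChar S (pmOf b) * chiChar S p.1 ∂D := by
        refine integral_congr_ae ?_
        filter_upwards [hD] with p ⟨hx, _⟩
        simp_rw [sum_chiChar_mul_chiChar, sum_mul_prod_one_add_pmOf_mul hg hx]
        field_simp
    _ = ∑ b : Fin d → Bool, g (pmOf b) * fJ D J (pmOf b) := by
        simp_rw [mul_sum]
        rw [integral_finsetSum _ fun _ _ => hint _]
        refine sum_congr rfl fun b _ => ?_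
        rw [integral_finsetSum _ fun _ _ => hint _, fJ, mul_sum]
        refine sum_congr rfl fun S _ => ?_
        rw [coeffA, ← integral_const_mul, ← integral_mul_const, ← integral_const_mul]
        congr 1 with p
        ring

theorem integral_label_mul_le_sum_abs_fJ [IsProbabilityMeasure D]
    (hD : ∀ᵐ p ∂D, (∀ i, p.1 i = 1 ∨ p.1 i = -1) ∧ (p.2 = 1 ∨ p.2 = -1))
    {J : Finset (Fin d)} {g : (Fin d → ℝ) → ℝ} (hpm : ∀ x, g x = 1 ∨ g x = -1)
    (hg : DependsOn g J) :
    ∫ p, p.2 * g p.1 ∂D ≤ ∑ b : Fin d → Bool, |fJ D J (pmOf b)| := by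
  rw [integral_label_mul_eq_sum_mul_fJ hD hg]
  refine sum_le_sum fun b _ => ?_
  rcases hpm (pmOf b) with h | h <;> simp [h, le_abs_self, neg_le_abs]

noncomputable def signFJ (D : Measure ((Fin d → ℝ) × ℝ)) (J : Finset (Fin d))
    (x : Fin d → ℝ) : ℝ :=
  if 0 ≤ fJ D J x then 1 else -1

theorem signFJ_eq_one_or_neg_one (D : Measure ((Fin d → ℝ) × ℝ)) (J : Finset (Fin d))
    (x : Fin d → ℝ) : signFJ D J x = 1 ∨ signFJ D J x = -1 := by
  unfold signFJ
  split <;> simp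

theorem signFJ_dependsOn (D : Measure ((Fin d → ℝ) × ℝ)) (J : Finset (Fin d)) :
    DependsOn (signFJ D J) J := fun _ _ h => by
  simp only [signFJ, fJ_dependsOn D J h]

theorem integral_label_mul_signFJ [IsProbabilityMeasure D]
    (hD : ∀ᵐ p ∂D, (∀ i, p.1 i = 1 ∨ p.1 i = -1) ∧ (p.2 = 1 ∨ p.2 = -1)) (J : Finset (Fin d)) :
    ∫ p, p.2 * signFJ D J p.1 ∂D = ∑ b : Fin d → Bool, |fJ D J (pmOf b)| := by
  rw [integral_label_mul_eq_sum_mul_fJ hD (signFJ_dependsOn D J)]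
  refine sum_congr rfl fun b _ => ?_
  by_cases h : 0 ≤ fJ D J (pmOf b) <;> simp [signFJ, h, abs_of_nonneg, abs_of_neg (not_le.1 h)]

end Loss

/-- For `(X,Y) ∼ D` on `{-1,1}^d × {-1,1}` and `k ≤ d`, the minimum 0-1
loss over all `k`-juntas equals
`1/2 - (1/2)·max_{J ⊆ [d], |J| = k} Σ_{x ∈ {-1,1}^d} |f^J(x)|`. -/
theorem opt_kjunta_loss_eq_half_sub_max_fJ_l1
    (d k : ℕ) (hk : k ≤ d)
    (D : Measure ((Fin d → ℝ) × ℝ)) [IsProbabilityMeasure D]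
    (hD : ∀ᵐ p ∂D, (∀ i, p.1 i = 1 ∨ p.1 i = -1) ∧ (p.2 = 1 ∨ p.2 = -1)) :
    (⨅ g : {g : (Fin d → ℝ) → ℝ //
        (∀ x, g x = 1 ∨ g x = -1) ∧
        ∃ J : Finset (Fin d), J.card ≤ k ∧
          ∀ x x' : Fin d → ℝ, (∀ i ∈ J, x i = x' i) → g x = g x'},
        (D {p | p.2 ≠ g.1 p.1}).toReal)
      = 1 / 2 - (1 / 2) *
          ⨆ J : {J : Finset (Fin d) // J.card = k},
            ∑ b : Fin d → Bool, |fJ D J.1 (pmOf b)| := by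
  have : Nonempty {J : Finset (Fin d) // J.card = k} := by
    obtain ⟨J, -, hJ⟩ := exists_subset_card_eq (s := (univ : Finset (Fin d))) (by simpa using hk)
    exact ⟨⟨J, hJ⟩⟩
  obtain ⟨J₀, hJ₀⟩ := exists_eq_ciSup_of_finite
    (f := fun J : {J : Finset (Fin d) // J.card = k} => ∑ b : Fin d → Bool, |fJ D J.1 (pmOf b)|)
  have hbdd := (Set.finite_range fun J : {J : Finset (Fin d) // J.card = k} =>
    ∑ b : Fin d → Bool, |fJ D J.1 (pmOf b)|).bddAbove
  have hsgn := signFJ_eq_one_or_neg_one D J₀.1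
  apply le_antisymm
  · refine (ciInf_le ⟨0, ?_⟩ ⟨signFJ D J₀, hsgn, J₀.1, J₀.2.le, signFJ_dependsOn D J₀⟩).trans_eq ?_
    · rintro _ ⟨g, rfl⟩
      exact ENNReal.toReal_nonneg
    rw [← measureReal_def, measureReal_label_ne_eq hD hsgn, integral_label_mul_signFJ hD, hJ₀]
  · refine @le_ciInf _ _ _ ⟨⟨signFJ D J₀, hsgn, J₀.1, J₀.2.le, signFJ_dependsOn D J₀⟩⟩ _ _
      fun ⟨g, hpm, J', hJ'k, hgJ'⟩ => ?_
    obtain ⟨J, hJ'J, hJk⟩ := exists_superset_card_eq hJ'k (by simpa using hk)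
    have hcorr := (integral_label_mul_le_sum_abs_fJ hD hpm
      (DependsOn.mono (coe_subset.2 hJ'J) hgJ')).trans (le_ciSup hbdd ⟨J, hJk⟩)
    rw [← measureReal_def, measureReal_label_ne_eq hD hpm]
    linarith
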